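/- arXiv:2603.26321 — 2 statements merged into one kernel-verified Lean document; each statement's English description precedes it below -/
import Mathlib

section
/- Let X be a complex Banach space and let T1, T2 be commuting bounded operators on X with ‖T1‖ < 1 and ‖T2‖ < 1 such that each function A_{Ti}(x) = (‖x‖² − ‖Ti x‖²)^{1/2} defines a norm on X (i = 1, 2). Let X1 and X2 be complex normed spaces together with linear bijections j_i : X → X_i satisfying ‖j_i x‖_{X_i} = A_{Ti}(x) for all x ∈ X (i.e. X_i realizes the normed space (X, A_{Ti})). Suppose there is a surjective linear isometry S on X1 ⊕₂ X2 satisfying S(j_1(T2 x), j_2 x) = (j_1 x, j_2(T1 x)) for all x ∈ X. Then there exist commuting isometries V1, V2 on the space W = X ⊕₂ ℓ²(ℕ, X1 ⊕₂ X2) such that for all nonnegative integers n1, n2 and all x ∈ X, the first coordinate of V1^{n1} V2^{n2}(x, 0) equals T1^{n1} T2^{n2} x, and the closed linear span of { V1^{n1} V2^{n2}(x, 0) : x ∈ X, n1, n2 ≥ 0 } is all of W. In other words, (T1, T2) admits a minimal isometric dilation on X ⊕₂ ℓ²(X1 ⊕₂ X2). -/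
/-!
On `W = X ⊕₂ ℓ²(X₁ ⊕₂ X₂)` put `V₁ (x, y) = (T₁ x, consFst (j₁ x) (S ∘ y))` and
`V₂ (x, y) = (T₂ x, S⁻¹ ∘ consSnd (j₂ x) y)`, where `consFst a` (resp. `consSnd b`) shifts the
`X₁`-components (resp. `X₂`-components) of a sequence one step to the right and puts `a`
(resp. `b`) in front. Since `x ↦ (Tᵢ x, jᵢ x)` is isometric, the `Vᵢ` are isometries.
The two partial shifts compose, in either order, to the full shift inserting `(a, b)`, so
`V₁ V₂ (x, y) = (T₁ T₂ x, (j₁ T₂ x, j₂ x) :: y)` and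
`V₂ V₁ (x, y) = (T₂ T₁ x, S⁻¹ (j₁ x, j₂ T₁ x) :: y)`, which agree by the intertwining identity
for `S`. For minimality, `V₁ (x, 0)` and
`V₁ V₂ (x, 0)` fill the first slot of `ℓ²(X₁ ⊕₂ X₂)`, and `V₁ V₂` shifts `(0, y)` to `(0, 0 :: y)`,
so the span of the orbit contains every finitely supported sequence.
-/

open WithLp

local notation "ℓ²(" E ")" => lp (fun _ : ℕ => E) 2

noncomputable section

theorem WithLp.prod_ext {p : ENNReal} {α β : Type*} {x y : WithLp p (α × β)}
    (h₁ : x.fst = y.fst) (h₂ : x.snd = y.snd) : x = y :=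
  (WithLp.ext_iff p).2 (Prod.ext h₁ h₂)

theorem Stream'.cons_zero {M : Type*} [Zero M] (y : M) :
    Stream'.cons y (0 : ℕ → M) = Pi.single 0 y := by
  funext j; cases j <;> simp [Stream'.cons]

theorem Stream'.cons_zero_single {M : Type*} [Zero M] (k : ℕ) (y : M) :
    Stream'.cons 0 (Pi.single k y) = Pi.single (k + 1) y := by
  funext j; cases j <;> simp [Stream'.cons, Pi.single_apply]

section Shifts

variable {E F : Type*}

def consFst (a : E) (n : ℕ → WithLp 2 (E × F)) : ℕ → WithLp 2 (E × F) :=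
  fun k => toLp 2 (Stream'.cons a (fun j => (n j).fst) k, (n k).snd)

def consSnd (b : F) (n : ℕ → WithLp 2 (E × F)) : ℕ → WithLp 2 (E × F) :=
  fun k => toLp 2 ((n k).fst, Stream'.cons b (fun j => (n j).snd) k)

theorem consFst_consSnd (a : E) (b : F) (n : ℕ → WithLp 2 (E × F)) :
    consFst a (consSnd b n) = Stream'.cons (toLp 2 (a, b)) n := by
  funext k; cases k <;> rfl

theorem consSnd_consFst (a : E) (b : F) (n : ℕ → WithLp 2 (E × F)) :
    consSnd b (consFst a n) = Stream'.cons (toLp 2 (a, b)) n := by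
  funext k; cases k <;> rfl

variable [AddCommGroup E] [AddCommGroup F]

theorem consFst_add (a a' : E) (n n' : ℕ → WithLp 2 (E × F)) :
    consFst a n + consFst a' n' = consFst (a + a') (n + n') := by
  funext k; cases k <;> rfl

theorem consSnd_add (b b' : F) (n n' : ℕ → WithLp 2 (E × F)) :
    consSnd b n + consSnd b' n' = consSnd (b + b') (n + n') := by
  funext k; cases k <;> rfl

theorem smul_consFst {R : Type*} [Semiring R] [Module R E] [Module R F] (c : R) (a : E)
    (n : ℕ → WithLp 2 (E × F)) : c • consFst a n = consFst (c • a) (c • n) := by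
  funext k; cases k <;> rfl

theorem smul_consSnd {R : Type*} [Semiring R] [Module R E] [Module R F] (c : R) (b : F)
    (n : ℕ → WithLp 2 (E × F)) : c • consSnd b n = consSnd (c • b) (c • n) := by
  funext k; cases k <;> rfl

theorem consFst_zero (a : E) :
    consFst a (0 : ℕ → WithLp 2 (E × F)) =
      Pi.single (M := fun _ => WithLp 2 (E × F)) 0 (toLp 2 (a, 0)) := by
  funext k; cases k <;> rfl

end Shifts

section lp

variable {ι : Type*} {E : ι → Type*} [∀ i, NormedAddCommGroup (E i)]

theorem lp.hasSum_norm_sq (m : lp E 2) : HasSum (fun i => ‖m i‖ ^ 2) (‖m‖ ^ 2) := by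
  simpa using lp.hasSum_norm (p := 2) (by norm_num) m

theorem lp.norm_sq_eq_of_hasSum (m : lp E 2) {s : ℝ} (h : HasSum (fun i => ‖m i‖ ^ 2) s) :
    ‖m‖ ^ 2 = s :=
  (lp.hasSum_norm_sq m).unique h

theorem memℓp_two_of_hasSum {f : ∀ i, E i} {s : ℝ} (h : HasSum (fun i => ‖f i‖ ^ 2) s) :
    Memℓp f 2 :=
  (memℓp_gen_iff (by norm_num)).2 (by simpa using h.summable)

end lp

section SquareSums

variable {ι E F : Type*} [NormedAddCommGroup E] [NormedAddCommGroup F]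

theorem HasSum.norm_sq_linearIsometry_comp {𝕜 : Type*} [NormedField 𝕜] [NormedSpace 𝕜 E]
    [NormedSpace 𝕜 F] (U : E →ₗᵢ[𝕜] F) {n : ι → E} {s : ℝ}
    (h : HasSum (fun k => ‖n k‖ ^ 2) s) : HasSum (fun k => ‖U (n k)‖ ^ 2) s := by
  simpa only [U.norm_map] using h

theorem exists_hasSum_norm_sq_fst_snd {n : ι → WithLp 2 (E × F)} {s : ℝ}
    (h : HasSum (fun k => ‖n k‖ ^ 2) s) :
    ∃ s₁ s₂, HasSum (fun k => ‖(n k).fst‖ ^ 2) s₁ ∧ HasSum (fun k => ‖(n k).snd‖ ^ 2) s₂ ∧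
      s₁ + s₂ = s := by
  have hle (k : ι) := (prod_norm_sq_eq_of_L2 (n k)).ge
  have h₁ : Summable fun k => ‖(n k).fst‖ ^ 2 := h.summable.of_nonneg_of_le
    (fun _ => by positivity) fun k => by linarith [hle k, sq_nonneg ‖(n k).snd‖]
  have h₂ : Summable fun k => ‖(n k).snd‖ ^ 2 := h.summable.of_nonneg_of_le
    (fun _ => by positivity) fun k => by linarith [hle k, sq_nonneg ‖(n k).fst‖]
  refine ⟨_, _, h₁.hasSum, h₂.hasSum, (h₁.hasSum.add h₂.hasSum).unique ?_⟩
  simpa only [prod_norm_sq_eq_of_L2] using h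

theorem hasSum_norm_sq_consFst {n : ℕ → WithLp 2 (E × F)} {s : ℝ}
    (h : HasSum (fun k => ‖n k‖ ^ 2) s) (a : E) :
    HasSum (fun k => ‖consFst a n k‖ ^ 2) (‖a‖ ^ 2 + s) := by
  obtain ⟨s₁, s₂, h₁, h₂, rfl⟩ := exists_hasSum_norm_sq_fst_snd h
  have h₀ : HasSum (fun k => ‖Stream'.cons a (fun j => (n j).fst) k‖ ^ 2) (‖a‖ ^ 2 + s₁) :=
    HasSum.zero_add h₁
  simpa only [consFst, prod_norm_sq_eq_of_L2, toLp_fst, toLp_snd, add_assoc] using h₀.add h₂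

theorem hasSum_norm_sq_consSnd {n : ℕ → WithLp 2 (E × F)} {s : ℝ}
    (h : HasSum (fun k => ‖n k‖ ^ 2) s) (b : F) :
    HasSum (fun k => ‖consSnd b n k‖ ^ 2) (‖b‖ ^ 2 + s) := by
  obtain ⟨s₁, s₂, h₁, h₂, rfl⟩ := exists_hasSum_norm_sq_fst_snd h
  have h₀ : HasSum (fun k => ‖Stream'.cons b (fun j => (n j).snd) k‖ ^ 2) (‖b‖ ^ 2 + s₂) :=
    HasSum.zero_add h₂
  convert h₁.add h₀ using 1
  · simp only [consSnd, prod_norm_sq_eq_of_L2, toLp_fst, toLp_snd]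
  · ring

end SquareSums

section ShiftIsometries

variable {𝕜 E F : Type*} [NormedField 𝕜] [NormedAddCommGroup E] [NormedSpace 𝕜 E]
  [NormedAddCommGroup F] [NormedSpace 𝕜 F] (U : WithLp 2 (E × F) →ₗᵢ[𝕜] WithLp 2 (E × F))

def consFstLp (p : WithLp 2 (E × ℓ²(WithLp 2 (E × F)))) : ℓ²(WithLp 2 (E × F)) :=
  ⟨consFst p.fst (fun k => U (p.snd k)), memℓp_two_of_hasSum
    (hasSum_norm_sq_consFst ((lp.hasSum_norm_sq p.snd).norm_sq_linearIsometry_comp U) p.fst)⟩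

theorem coe_consFstLp (p : WithLp 2 (E × ℓ²(WithLp 2 (E × F)))) :
    ⇑(consFstLp U p) = consFst p.fst (fun k => U (p.snd k)) := rfl

theorem norm_consFstLp (p : WithLp 2 (E × ℓ²(WithLp 2 (E × F)))) :
    ‖consFstLp U p‖ = ‖p‖ := by
  have h := hasSum_norm_sq_consFst ((lp.hasSum_norm_sq p.snd).norm_sq_linearIsometry_comp U) p.fst
  refine (sq_eq_sq₀ (norm_nonneg _) (norm_nonneg _)).1 ?_
  rw [lp.norm_sq_eq_of_hasSum (consFstLp U p) h, prod_norm_sq_eq_of_L2]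

def consFstIsometry : WithLp 2 (E × ℓ²(WithLp 2 (E × F))) →ₗᵢ[𝕜] ℓ²(WithLp 2 (E × F)) where
  toFun := consFstLp U
  map_add' p q := lp.ext <| by
    rw [lp.coeFn_add, coe_consFstLp, coe_consFstLp, coe_consFstLp, consFst_add]
    congr 1
    funext k
    simp only [add_snd, lp.coeFn_add, Pi.add_apply, map_add]
  map_smul' c p := lp.ext <| by
    rw [lp.coeFn_smul, coe_consFstLp, coe_consFstLp, smul_consFst]
    congr 1
    funext k
    simp only [smul_snd, lp.coeFn_smul, Pi.smul_apply, map_smul, RingHom.id_apply]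
  norm_map' := norm_consFstLp U

def consSndLp (p : WithLp 2 (F × ℓ²(WithLp 2 (E × F)))) : ℓ²(WithLp 2 (E × F)) :=
  ⟨fun k => U (consSnd p.fst p.snd k), memℓp_two_of_hasSum
    ((hasSum_norm_sq_consSnd (lp.hasSum_norm_sq p.snd) p.fst).norm_sq_linearIsometry_comp U)⟩

theorem coe_consSndLp (p : WithLp 2 (F × ℓ²(WithLp 2 (E × F)))) :
    ⇑(consSndLp U p) = fun k => U (consSnd p.fst p.snd k) := rfl

theorem norm_consSndLp (p : WithLp 2 (F × ℓ²(WithLp 2 (E × F)))) :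
    ‖consSndLp U p‖ = ‖p‖ := by
  have h := (hasSum_norm_sq_consSnd (lp.hasSum_norm_sq p.snd) p.fst).norm_sq_linearIsometry_comp U
  refine (sq_eq_sq₀ (norm_nonneg _) (norm_nonneg _)).1 ?_
  rw [lp.norm_sq_eq_of_hasSum (consSndLp U p) h, prod_norm_sq_eq_of_L2]

def consSndIsometry : WithLp 2 (F × ℓ²(WithLp 2 (E × F))) →ₗᵢ[𝕜] ℓ²(WithLp 2 (E × F)) where
  toFun := consSndLp U
  map_add' p q := lp.ext <| by
    rw [lp.coeFn_add, coe_consSndLp, coe_consSndLp, coe_consSndLp]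
    funext k
    rw [Pi.add_apply, ← map_add, add_fst, add_snd, lp.coeFn_add, ← consSnd_add]
    rfl
  map_smul' c p := lp.ext <| by
    rw [lp.coeFn_smul, coe_consSndLp, coe_consSndLp]
    funext k
    rw [Pi.smul_apply, RingHom.id_apply, ← map_smul, smul_fst, smul_snd, lp.coeFn_smul,
      ← smul_consSnd]
    rfl
  norm_map' := norm_consSndLp U

end ShiftIsometries

section IsometricLift

variable {𝕜 X Z L : Type*} [NormedField 𝕜] [NormedAddCommGroup X] [NormedSpace 𝕜 X]
  [NormedAddCommGroup Z] [NormedSpace 𝕜 Z] [NormedAddCommGroup L] [NormedSpace 𝕜 L]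

theorem norm_sq_add_norm_sq_of_eq_sqrt {T : X → X} (hT : ∀ x, ‖T x‖ ≤ ‖x‖) {j : X → Z}
    (hj : ∀ x, ‖j x‖ = √(‖x‖ ^ 2 - ‖T x‖ ^ 2)) (x : X) : ‖T x‖ ^ 2 + ‖j x‖ ^ 2 = ‖x‖ ^ 2 := by
  rw [hj, Real.sq_sqrt (sub_nonneg.2 (pow_le_pow_left₀ (norm_nonneg _) (hT x) 2))]
  ring

def isometricLift (T : X →ₗ[𝕜] X) (j : X →ₗ[𝕜] Z) (φ : WithLp 2 (Z × L) →ₗᵢ[𝕜] L)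
    (h : ∀ x, ‖T x‖ ^ 2 + ‖j x‖ ^ 2 = ‖x‖ ^ 2) : WithLp 2 (X × L) →ₗᵢ[𝕜] WithLp 2 (X × L) where
  toFun w := toLp 2 (T w.fst, φ (toLp 2 (j w.fst, w.snd)))
  map_add' v w := by
    refine WithLp.prod_ext (map_add T v.fst w.fst) ?_
    change φ (toLp 2 (j (v.fst + w.fst), v.snd + w.snd)) = φ _ + φ _
    rw [← map_add, map_add j]
    rfl
  map_smul' c w := by
    refine WithLp.prod_ext (map_smul T c w.fst) ?_
    change φ (toLp 2 (j (c • w.fst), c • w.snd)) = c • φ _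
    rw [← map_smul, map_smul j]
    rfl
  norm_map' w := by
    change ‖toLp 2 (T w.fst, φ (toLp 2 (j w.fst, w.snd)))‖ = ‖w‖
    refine (sq_eq_sq₀ (norm_nonneg _) (norm_nonneg _)).1 ?_
    simp only [prod_norm_sq_eq_of_L2, toLp_fst, toLp_snd, LinearIsometry.norm_map]
    rw [← h w.fst, add_assoc]

theorem semiconj_fst_isometricLift (T : X →ₗ[𝕜] X) (j : X →ₗ[𝕜] Z)
    (φ : WithLp 2 (Z × L) →ₗᵢ[𝕜] L) (h : ∀ x, ‖T x‖ ^ 2 + ‖j x‖ ^ 2 = ‖x‖ ^ 2) :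
    Function.Semiconj WithLp.fst (isometricLift T j φ h) T :=
  fun _ => rfl

end IsometricLift

section AndoDilation

variable {𝕜 X X₁ X₂ : Type*} [NormedField 𝕜] [NormedAddCommGroup X] [NormedSpace 𝕜 X]
  [NormedAddCommGroup X₁] [NormedSpace 𝕜 X₁] [NormedAddCommGroup X₂] [NormedSpace 𝕜 X₂]
  {T₁ T₂ : X →ₗ[𝕜] X} {j₁ : X →ₗ[𝕜] X₁} {j₂ : X →ₗ[𝕜] X₂}
  (S : WithLp 2 (X₁ × X₂) ≃ₗᵢ[𝕜] WithLp 2 (X₁ × X₂))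
  (h₁ : ∀ x, ‖T₁ x‖ ^ 2 + ‖j₁ x‖ ^ 2 = ‖x‖ ^ 2) (h₂ : ∀ x, ‖T₂ x‖ ^ 2 + ‖j₂ x‖ ^ 2 = ‖x‖ ^ 2)

local notation "W" => WithLp 2 (X × ℓ²(WithLp 2 (X₁ × X₂)))

def andoDilation₁ : W →ₗᵢ[𝕜] W := isometricLift T₁ j₁ (consFstIsometry S.toLinearIsometry) h₁

def andoDilation₂ : W →ₗᵢ[𝕜] W :=
  isometricLift T₂ j₂ (consSndIsometry S.symm.toLinearIsometry) h₂

theorem coe_andoDilation₁_andoDilation₂_snd (w : W) :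
    ⇑(andoDilation₁ S h₁ (andoDilation₂ S h₂ w)).snd =
      Stream'.cons (toLp 2 (j₁ (T₂ w.fst), j₂ w.fst)) ⇑w.snd := by
  change consFst _ (fun k => S (S.symm (consSnd (j₂ w.fst) w.snd k))) = _
  simp only [LinearIsometryEquiv.apply_symm_apply]
  exact consFst_consSnd _ _ _

theorem coe_andoDilation₂_andoDilation₁_snd (w : W) :
    ⇑(andoDilation₂ S h₂ (andoDilation₁ S h₁ w)).snd =
      Stream'.cons (S.symm (toLp 2 (j₁ w.fst, j₂ (T₁ w.fst)))) ⇑w.snd := by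
  change (fun k => S.symm (consSnd _ (consFst (j₁ w.fst) (fun k => S (w.snd k))) k)) = _
  rw [consSnd_consFst]
  funext k
  cases k
  · rfl
  · exact S.symm_apply_apply _

theorem commute_andoDilation (hT : Function.Commute T₁ T₂)
    (hS : ∀ x, S (toLp 2 (j₁ (T₂ x), j₂ x)) = toLp 2 (j₁ x, j₂ (T₁ x))) :
    Function.Commute (andoDilation₁ S h₁) (andoDilation₂ S h₂) := fun w =>
  WithLp.prod_ext (hT w.fst) <| lp.ext <| by
    rw [coe_andoDilation₁_andoDilation₂_snd, coe_andoDilation₂_andoDilation₁_snd, ← hS,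
      S.symm_apply_apply]

theorem andoDilation₁_inl (x : X) :
    andoDilation₁ S h₁ (toLp 2 (x, 0)) =
      (toLp 2 (T₁ x, lp.single 2 0 (toLp 2 (j₁ x, 0))) : W) := by
  refine WithLp.prod_ext rfl (lp.ext ?_)
  change consFst _ (fun k => S ((0 : ℓ²(WithLp 2 (X₁ × X₂))) k)) = _
  simp only [lp.coeFn_zero, Pi.zero_apply, map_zero]
  exact consFst_zero _

theorem andoDilation₁_andoDilation₂_inl (x : X) :
    andoDilation₁ S h₁ (andoDilation₂ S h₂ (toLp 2 (x, 0))) =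
      (toLp 2 (T₁ (T₂ x), lp.single 2 0 (toLp 2 (j₁ (T₂ x), j₂ x))) : W) := by
  refine WithLp.prod_ext rfl (lp.ext ?_)
  rw [coe_andoDilation₁_andoDilation₂_snd]
  simp only [toLp_fst, toLp_snd, lp.coeFn_zero, lp.coeFn_single]
  exact Stream'.cons_zero _

theorem andoDilation₁_andoDilation₂_inr_single (k : ℕ) (y : WithLp 2 (X₁ × X₂)) :
    andoDilation₁ S h₁ (andoDilation₂ S h₂ (toLp 2 (0, lp.single 2 k y))) =
      toLp 2 (0, lp.single 2 (k + 1) y) := by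
  refine WithLp.prod_ext (show T₁ (T₂ 0) = 0 by rw [map_zero, map_zero]) (lp.ext ?_)
  rw [coe_andoDilation₁_andoDilation₂_snd]
  simp only [toLp_fst, toLp_snd, map_zero, lp.coeFn_single]
  exact Stream'.cons_zero_single k y

theorem inr_single_mem_of_andoDilation_invariant (hj₁ : Function.Surjective j₁)
    (hj₂ : Function.Surjective j₂) {N : Submodule 𝕜 W} (hX : ∀ x, (toLp 2 (x, 0) : W) ∈ N)
    (hN₁ : ∀ w ∈ N, andoDilation₁ S h₁ w ∈ N) (hN₂ : ∀ w ∈ N, andoDilation₂ S h₂ w ∈ N)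
    (k : ℕ) (y : WithLp 2 (X₁ × X₂)) : (toLp 2 (0, lp.single 2 k y) : W) ∈ N := by
  induction k generalizing y with
  | zero =>
    obtain ⟨x₁, hx₁⟩ := hj₁ y.fst
    obtain ⟨x₂, hx₂⟩ := hj₂ y.snd
    -- `(y.fst, 0)` in slot `0` comes from `V₁ (x₁, 0)`, and `(0, y.snd)` from
    -- `V₁ V₂ (x₂, 0) - V₁ (T₂ x₂, 0)`.
    have key : (toLp 2 (0, lp.single 2 0 y) : W) =
        (andoDilation₁ S h₁ (toLp 2 (x₁, 0)) - toLp 2 (T₁ x₁, 0)) +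
        (andoDilation₁ S h₁ (andoDilation₂ S h₂ (toLp 2 (x₂, 0))) -
          andoDilation₁ S h₁ (toLp 2 (T₂ x₂, 0))) := by
      rw [andoDilation₁_inl, andoDilation₁_inl, andoDilation₁_andoDilation₂_inl]
      refine WithLp.prod_ext (by simp) ?_
      simp only [add_snd, sub_snd, toLp_snd, sub_zero, ← lp.single_sub, ← lp.single_add]
      congr 1
      refine WithLp.prod_ext ?_ ?_ <;> simp [hx₁, hx₂]
    rw [key]
    exact N.add_mem (N.sub_mem (hN₁ _ (hX x₁)) (hX _))
      (N.sub_mem (hN₁ _ (hN₂ _ (hX x₂))) (hN₁ _ (hX _)))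
  | succ k ih =>
    rw [← andoDilation₁_andoDilation₂_inr_single S h₁ h₂]
    exact hN₁ _ (hN₂ _ (ih y))

end AndoDilation

theorem topologicalClosure_eq_top_of_inl_of_inr_single {𝕜 X E : Type*} [NormedField 𝕜]
    [NormedAddCommGroup X] [NormedSpace 𝕜 X] [NormedAddCommGroup E] [NormedSpace 𝕜 E]
    {N : Submodule 𝕜 (WithLp 2 (X × ℓ²(E)))} (hX : ∀ x, toLp 2 (x, 0) ∈ N)
    (hE : ∀ k y, toLp 2 (0, lp.single 2 k y) ∈ N) : N.topologicalClosure = ⊤ := by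
  let inr : ℓ²(E) →L[𝕜] WithLp 2 (X × ℓ²(E)) :=
    (WithLp.prodContinuousLinearEquiv 2 𝕜 X ℓ²(E)).symm.toContinuousLinearMap ∘L
      ContinuousLinearMap.inr 𝕜 X ℓ²(E)
  have hinr (m : ℓ²(E)) : toLp 2 (0, m) ∈ N.topologicalClosure :=
    N.isClosed_topologicalClosure.mem_of_tendsto ((lp.hasSum_single (by norm_num) m).mapL inr)
      (Filter.Eventually.of_forall fun s =>
        N.le_topologicalClosure (N.sum_mem fun k _ => hE k (m k)))
  refine Submodule.eq_top_iff'.2 fun w => ?_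
  have hw : w = toLp 2 (w.fst, 0) + toLp 2 (0, w.snd) := WithLp.prod_ext (by simp) (by simp)
  rw [hw]
  exact N.topologicalClosure.add_mem (N.le_topologicalClosure (hX _)) (hinr _)

theorem map_mem_span_orbit {R M ι : Type*} [Semiring R] [AddCommMonoid M] [Module R M]
    [TopologicalSpace M] {A B : M →L[R] M} (hAB : Commute A B) {g : ι → M} {w : M}
    (hw : w ∈ Submodule.span R {v | ∃ (a b : ℕ) (i : ι), v = (A ^ a * B ^ b) (g i)}) :
    A w ∈ Submodule.span R {v | ∃ (a b : ℕ) (i : ι), v = (A ^ a * B ^ b) (g i)} ∧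
      B w ∈ Submodule.span R {v | ∃ (a b : ℕ) (i : ι), v = (A ^ a * B ^ b) (g i)} := by
  set N := Submodule.span R {v | ∃ (a b : ℕ) (i : ι), v = (A ^ a * B ^ b) (g i)}
  have hA : N ≤ N.comap (A : M →ₗ[R] M) := Submodule.span_le.2 <| by
    rintro _ ⟨a, b, i, rfl⟩
    exact Submodule.subset_span ⟨a + 1, b, i, by rw [pow_succ', mul_assoc]; rfl⟩
  have hB : N ≤ N.comap (B : M →ₗ[R] M) := Submodule.span_le.2 <| by
    rintro _ ⟨a, b, i, rfl⟩
    refine Submodule.subset_span ⟨a, b + 1, i, ?_⟩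
    rw [pow_succ', ← mul_assoc, (hAB.pow_left a).eq, mul_assoc]
    rfl
  exact ⟨hA hw, hB hw⟩

end

theorem banach_ando_minimal_isometric_dilation_general
    (X : Type*) [NormedAddCommGroup X] [NormedSpace ℂ X]
    (T1 T2 : X →L[ℂ] X) (hcomm : T1 ∘L T2 = T2 ∘L T1)
    (hT1 : ‖T1‖ < 1) (hT2 : ‖T2‖ < 1)
    (X1 X2 : Type*) [NormedAddCommGroup X1] [NormedSpace ℂ X1]
    [NormedAddCommGroup X2] [NormedSpace ℂ X2]
    (j1 : X ≃ₗ[ℂ] X1) (j2 : X ≃ₗ[ℂ] X2)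
    (hj1 : ∀ x : X, ‖j1 x‖ = Real.sqrt (‖x‖ ^ 2 - ‖T1 x‖ ^ 2))
    (hj2 : ∀ x : X, ‖j2 x‖ = Real.sqrt (‖x‖ ^ 2 - ‖T2 x‖ ^ 2))
    (S : WithLp 2 (X1 × X2) ≃ₗᵢ[ℂ] WithLp 2 (X1 × X2))
    (hS : ∀ x : X,
      S (WithLp.toLp 2 (j1 (T2 x), j2 x) : WithLp 2 (X1 × X2))
        = (WithLp.toLp 2 (j1 x, j2 (T1 x)) : WithLp 2 (X1 × X2))) :
    ∃ V1 V2 : WithLp 2 (X × lp (fun _ : ℕ => WithLp 2 (X1 × X2)) 2) →L[ℂ]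
        WithLp 2 (X × lp (fun _ : ℕ => WithLp 2 (X1 × X2)) 2),
      (∀ w, ‖V1 w‖ = ‖w‖) ∧ (∀ w, ‖V2 w‖ = ‖w‖) ∧
      V1 ∘L V2 = V2 ∘L V1 ∧
      (∀ (n1 n2 : ℕ) (x : X),
        (WithLp.ofLp (((V1 ^ n1) * (V2 ^ n2))
            (WithLp.toLp 2 (x, 0) : WithLp 2 (X × lp (fun _ : ℕ => WithLp 2 (X1 × X2)) 2)))).1
          = ((T1 ^ n1) * (T2 ^ n2)) x) ∧
      (Submodule.span ℂ
          {w : WithLp 2 (X × lp (fun _ : ℕ => WithLp 2 (X1 × X2)) 2) |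
            ∃ (n1 n2 : ℕ) (x : X),
              w = ((V1 ^ n1) * (V2 ^ n2))
                (WithLp.toLp 2 (x, 0) : WithLp 2 (X × lp (fun _ : ℕ => WithLp 2 (X1 × X2)) 2))}
        ).topologicalClosure = ⊤ := by
  have h₁ : ∀ x, ‖(T1 : X →ₗ[ℂ] X) x‖ ^ 2 + ‖(j1 : X →ₗ[ℂ] X1) x‖ ^ 2 = ‖x‖ ^ 2 :=
    norm_sq_add_norm_sq_of_eq_sqrt (fun x => (T1.le_of_opNorm_le hT1.le x).trans_eq (one_mul _)) hj1
  have h₂ : ∀ x, ‖(T2 : X →ₗ[ℂ] X) x‖ ^ 2 + ‖(j2 : X →ₗ[ℂ] X2) x‖ ^ 2 = ‖x‖ ^ 2 :=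
    norm_sq_add_norm_sq_of_eq_sqrt (fun x => (T2.le_of_opNorm_le hT2.le x).trans_eq (one_mul _)) hj2
  set V₁ := (andoDilation₁ S h₁).toContinuousLinearMap
  set V₂ := (andoDilation₂ S h₂).toContinuousLinearMap
  have hV : Commute V₁ V₂ := ContinuousLinearMap.ext <|
    commute_andoDilation S h₁ h₂ (fun x => congr($hcomm x)) hS
  refine ⟨V₁, V₂, (andoDilation₁ S h₁).norm_map, (andoDilation₂ S h₂).norm_map, hV.eq,
    fun n₁ n₂ x => ?_, ?_⟩
  · simp only [mul_apply_eq_comp, pow_apply_eq_iterate]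
    exact ((semiconj_fst_isometricLift _ _ _ h₁).iterate_right n₁ _).trans
      (congrArg _ ((semiconj_fst_isometricLift _ _ _ h₂).iterate_right n₂ _))
  · have hX (x : X) : toLp 2 (x, 0) ∈ Submodule.span ℂ {w | ∃ (n1 n2 : ℕ) (x : X),
        w = ((V₁ ^ n1) * (V₂ ^ n2)) (toLp 2 (x, 0))} :=
      Submodule.subset_span ⟨0, 0, x, by simp⟩
    exact topologicalClosure_eq_top_of_inl_of_inr_single hX
      (inr_single_mem_of_andoDilation_invariant S h₁ h₂ j1.surjective j2.surjective hX
        (fun _ hw => (map_mem_span_orbit hV hw).1) (fun _ hw => (map_mem_span_orbit hV hw).2))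

/-- (Theorem 2.4). Let `(T1, T2)` be a commuting pair of strict contractions on a complex
Banach space `X` such that `A_{Ti}(x) = (‖x‖² - ‖Ti x‖²)^{1/2}` defines a norm on `X` for
`i = 1, 2`, and let `Xi` realize the normed space `(X, A_{Ti})` via a linear bijection `ji`.
If there is a surjective linear isometry `S` on `X1 ⊕₂ X2` with
`S (j1 (T2 x), j2 x) = (j1 x, j2 (T1 x))` for all `x`, then `(T1, T2)` admits a minimal
isometric dilation on `X ⊕₂ ℓ²(ℕ, X1 ⊕₂ X2)`. -/
theorem banach_ando_minimal_isometric_dilation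
    (X : Type*) [NormedAddCommGroup X] [NormedSpace ℂ X] [CompleteSpace X]
    (T1 T2 : X →L[ℂ] X) (hcomm : T1 ∘L T2 = T2 ∘L T1)
    (hT1 : ‖T1‖ < 1) (hT2 : ‖T2‖ < 1)
    (hdef1 : ∀ x : X, Real.sqrt (‖x‖ ^ 2 - ‖T1 x‖ ^ 2) = 0 → x = 0)
    (hdef2 : ∀ x : X, Real.sqrt (‖x‖ ^ 2 - ‖T2 x‖ ^ 2) = 0 → x = 0)
    (htri1 : ∀ x y : X,
      Real.sqrt (‖x + y‖ ^ 2 - ‖T1 (x + y)‖ ^ 2)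
        ≤ Real.sqrt (‖x‖ ^ 2 - ‖T1 x‖ ^ 2) + Real.sqrt (‖y‖ ^ 2 - ‖T1 y‖ ^ 2))
    (htri2 : ∀ x y : X,
      Real.sqrt (‖x + y‖ ^ 2 - ‖T2 (x + y)‖ ^ 2)
        ≤ Real.sqrt (‖x‖ ^ 2 - ‖T2 x‖ ^ 2) + Real.sqrt (‖y‖ ^ 2 - ‖T2 y‖ ^ 2))
    (X1 X2 : Type*) [NormedAddCommGroup X1] [NormedSpace ℂ X1]
    [NormedAddCommGroup X2] [NormedSpace ℂ X2]
    (j1 : X ≃ₗ[ℂ] X1) (j2 : X ≃ₗ[ℂ] X2)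
    (hj1 : ∀ x : X, ‖j1 x‖ = Real.sqrt (‖x‖ ^ 2 - ‖T1 x‖ ^ 2))
    (hj2 : ∀ x : X, ‖j2 x‖ = Real.sqrt (‖x‖ ^ 2 - ‖T2 x‖ ^ 2))
    (S : WithLp 2 (X1 × X2) ≃ₗᵢ[ℂ] WithLp 2 (X1 × X2))
    (hS : ∀ x : X,
      S (WithLp.toLp 2 (j1 (T2 x), j2 x) : WithLp 2 (X1 × X2))
        = (WithLp.toLp 2 (j1 x, j2 (T1 x)) : WithLp 2 (X1 × X2))) :
    ∃ V1 V2 : WithLp 2 (X × lp (fun _ : ℕ => WithLp 2 (X1 × X2)) 2) →L[ℂ]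
        WithLp 2 (X × lp (fun _ : ℕ => WithLp 2 (X1 × X2)) 2),
      (∀ w, ‖V1 w‖ = ‖w‖) ∧ (∀ w, ‖V2 w‖ = ‖w‖) ∧
      V1 ∘L V2 = V2 ∘L V1 ∧
      (∀ (n1 n2 : ℕ) (x : X),
        (WithLp.ofLp (((V1 ^ n1) * (V2 ^ n2))
            (WithLp.toLp 2 (x, 0) : WithLp 2 (X × lp (fun _ : ℕ => WithLp 2 (X1 × X2)) 2)))).1
          = ((T1 ^ n1) * (T2 ^ n2)) x) ∧
      (Submodule.span ℂ
          {w : WithLp 2 (X × lp (fun _ : ℕ => WithLp 2 (X1 × X2)) 2) |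
            ∃ (n1 n2 : ℕ) (x : X),
              w = ((V1 ^ n1) * (V2 ^ n2))
                (WithLp.toLp 2 (x, 0) : WithLp 2 (X × lp (fun _ : ℕ => WithLp 2 (X1 × X2)) 2))}
        ).topologicalClosure = ⊤ :=
  banach_ando_minimal_isometric_dilation_general X T1 T2 hcomm hT1 hT2 X1 X2 j1 j2 hj1 hj2 S hS
end

section
/- Let X be a complex normed space (not assumed complete) and let T1, T2 be commuting contractions on X (norms are allowed to equal 1) such that each function A_{Ti}(x) = (‖x‖² − ‖Ti x‖²)^{1/2} defines a norm on X (i = 1, 2). Let X1 and X2 be complex normed spaces together with linear bijections j_i : X → X_i satisfying ‖j_i x‖_{X_i} = A_{Ti}(x) for all x ∈ X. Suppose there is a surjective linear isometry S on X1 ⊕₂ X2 satisfying S(j_1(T2 x), j_2 x) = (j_1 x, j_2(T1 x)) for all x ∈ X. Then there exist commuting isometries V1, V2 on the normed space W = X ⊕₂ ℓ²(ℕ, X1 ⊕₂ X2) such that for all nonnegative integers n1, n2 and all x ∈ X, the first coordinate of V1^{n1} V2^{n2}(x, 0) equals T1^{n1} T2^{n2} x; that is, (T1, T2) dilates to a commuting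 pair of isometries on a normed linear space. -/
/-!
Ando's construction carries over to normed spaces. Put `E = X1 ⊕₂ X2` and let `D1 x = (j1 x, 0)`,
`D2 x = (0, j2 x)`, so that `‖Ti x‖² + ‖Di x‖² = ‖x‖²`. Schäffer's isometry
`Wi (x, f) = (Ti x, Di x :: f)` on `X ⊕₂ ℓ²(ℕ, E)` lifts `Ti`, but `W1 W2` and `W2 W1` prepend the
different pairs `(D1 T2 x, D2 x)` and `(D2 T1 x, D1 x)`. The isometry `S` yields a unitary `U` of
`E ⊕₂ E` taking the first pair to the second; applying `U` to consecutive pairs of entries of a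
sequence gives a unitary `G` with `G W1 W2 = W2 W1 G`. Hence `V1 = W1 G` and `V2 = G⁻¹ W2` are
commuting isometries, and they dilate `(T1, T2)` because each `Vi` acts on the `X`-coordinate
as `Ti`.
-/

open scoped ENNReal

section PairedSums

variable {α : Type*} [AddCommGroup α] [UniformSpace α] [IsUniformAddGroup α] [CompleteSpace α]
  {g : ℕ → α}

theorem Summable.comp_two_mul (hg : Summable g) : Summable fun m => g (2 * m) :=
  hg.comp_injective (mul_right_injective₀ two_ne_zero)

theorem Summable.comp_two_mul_add_one (hg : Summable g) : Summable fun m => g (2 * m + 1) :=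
  hg.comp_injective ((add_left_injective 1).comp (mul_right_injective₀ two_ne_zero))

theorem Summable.tsum_eq_tsum_pairs [T2Space α] (hg : Summable g) :
    ∑' n, g n = ∑' m, (g (2 * m) + g (2 * m + 1)) := by
  rw [← tsum_even_add_odd hg.comp_two_mul hg.comp_two_mul_add_one,
    hg.comp_two_mul.tsum_add hg.comp_two_mul_add_one]

end PairedSums

theorem funext_even_odd {α : Type*} {f g : ℕ → α} (heven : ∀ m, f (2 * m) = g (2 * m))
    (hodd : ∀ m, f (2 * m + 1) = g (2 * m + 1)) : f = g := by
  funext n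
  obtain ⟨m, rfl | rfl⟩ := Nat.even_or_odd' n
  exacts [heven m, hodd m]

theorem WithLp.toLp_fst_snd {p : ℝ≥0∞} {α β : Type*} (x : WithLp p (α × β)) :
    WithLp.toLp p (x.fst, x.snd) = x :=
  rfl

section MapPairs

variable {E : Type*}

/-- `U` applied to each pair `(f (2 * m), f (2 * m + 1))`. -/
def mapPairs (U : WithLp 2 (E × E) → WithLp 2 (E × E)) (f : ℕ → E) (n : ℕ) : E :=
  if n % 2 = 0 then (U (WithLp.toLp 2 (f n, f (n + 1)))).fst
  else (U (WithLp.toLp 2 (f (n - 1), f n))).snd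

variable (U : WithLp 2 (E × E) → WithLp 2 (E × E)) (f : ℕ → E)

@[simp] theorem mapPairs_two_mul (m : ℕ) :
    mapPairs U f (2 * m) = (U (WithLp.toLp 2 (f (2 * m), f (2 * m + 1)))).fst := by
  simp [mapPairs]

@[simp] theorem mapPairs_two_mul_add_one (m : ℕ) :
    mapPairs U f (2 * m + 1) = (U (WithLp.toLp 2 (f (2 * m), f (2 * m + 1)))).snd := by
  simp [mapPairs, Nat.add_mod]

theorem mapPairs_add_two (n : ℕ) :
    mapPairs U f (n + 2) = mapPairs U (fun k => f (k + 2)) n := by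
  obtain ⟨m, rfl | rfl⟩ := Nat.even_or_odd' n
  · simpa [mul_add, add_right_comm] using mapPairs_two_mul U f (m + 1)
  · simpa [mul_add, add_right_comm] using mapPairs_two_mul_add_one U f (m + 1)

theorem mapPairs_mapPairs {V : WithLp 2 (E × E) → WithLp 2 (E × E)} (hVU : ∀ p, V (U p) = p) :
    mapPairs V (mapPairs U f) = f :=
  funext_even_odd (fun m => by simp [WithLp.toLp_fst_snd, hVU])
    (fun m => by simp [WithLp.toLp_fst_snd, hVU])

variable {U} [NormedAddCommGroup E]

theorem norm_sq_fst_add_norm_sq_snd (hU : ∀ p, ‖U p‖ = ‖p‖) (a b : E) :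
    ‖(U (WithLp.toLp 2 (a, b))).fst‖ ^ 2 + ‖(U (WithLp.toLp 2 (a, b))).snd‖ ^ 2
      = ‖a‖ ^ 2 + ‖b‖ ^ 2 := by
  rw [← WithLp.prod_norm_sq_eq_of_L2, hU, WithLp.prod_norm_sq_eq_of_L2]
  rfl

theorem summable_norm_sq_mapPairs (hU : ∀ p, ‖U p‖ = ‖p‖) {f : ℕ → E}
    (hf : Summable fun n => ‖f n‖ ^ 2) : Summable fun n => ‖mapPairs U f n‖ ^ 2 := by
  have hpairs := hf.comp_two_mul.add hf.comp_two_mul_add_one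
  have hU' := norm_sq_fst_add_norm_sq_snd hU
  refine .even_add_odd ?_ ?_ <;>
    refine hpairs.of_nonneg_of_le (fun m => sq_nonneg _) (fun m => ?_)
  · simpa using le_of_add_le_of_nonneg_left (hU' (f (2 * m)) (f (2 * m + 1))).le (sq_nonneg _)
  · simpa using le_of_add_le_of_nonneg_right (hU' (f (2 * m)) (f (2 * m + 1))).le (sq_nonneg _)

theorem tsum_norm_sq_mapPairs (hU : ∀ p, ‖U p‖ = ‖p‖) {f : ℕ → E}
    (hf : Summable fun n => ‖f n‖ ^ 2) : ∑' n, ‖mapPairs U f n‖ ^ 2 = ∑' n, ‖f n‖ ^ 2 := by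
  rw [(summable_norm_sq_mapPairs hU hf).tsum_eq_tsum_pairs, hf.tsum_eq_tsum_pairs]
  simp [norm_sq_fst_add_norm_sq_snd hU]

end MapPairs

section SquareSummable

variable {ι : Type*} {E : ι → Type*} [∀ i, NormedAddCommGroup (E i)]

theorem memℓp_two_iff {f : ∀ i, E i} : Memℓp f 2 ↔ Summable fun i => ‖f i‖ ^ 2 := by
  simpa using memℓp_gen_iff (p := 2) (f := f) (by norm_num)

theorem lp.norm_sq_eq_tsum (f : lp E 2) : ‖f‖ ^ 2 = ∑' i, ‖f i‖ ^ 2 := by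
  simpa using lp.norm_rpow_eq_tsum (p := 2) (by norm_num) f

end SquareSummable

namespace lp

variable {𝕜 E : Type*} [NormedField 𝕜] [NormedAddCommGroup E] [NormedSpace 𝕜 E]

def cons (a : E) (f : lp (fun _ : ℕ => E) 2) : lp (fun _ : ℕ => E) 2 :=
  ⟨fun n => Nat.casesOn n a f, memℓp_two_iff.2 <|
    (summable_nat_add_iff (f := fun n => ‖(Nat.casesOn n a f : E)‖ ^ 2) 1).1
      (memℓp_two_iff.1 f.2)⟩

theorem cons_add (a b : E) (f g : lp (fun _ : ℕ => E) 2) :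
    cons (a + b) (f + g) = cons a f + cons b g :=
  lp.ext <| funext fun n => by cases n <;> rfl

theorem cons_smul (c : 𝕜) (a : E) (f : lp (fun _ : ℕ => E) 2) :
    cons (c • a) (c • f) = c • cons a f :=
  lp.ext <| funext fun n => by cases n <;> rfl

theorem norm_cons_sq (a : E) (f : lp (fun _ : ℕ => E) 2) :
    ‖cons a f‖ ^ 2 = ‖a‖ ^ 2 + ‖f‖ ^ 2 := by
  rw [norm_sq_eq_tsum, norm_sq_eq_tsum, (memℓp_two_iff.1 (cons a f).2).tsum_eq_zero_add]
  rfl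

noncomputable def mapPairs (U : WithLp 2 (E × E) ≃ₗᵢ[𝕜] WithLp 2 (E × E)) :
    lp (fun _ : ℕ => E) 2 ≃ₗᵢ[𝕜] lp (fun _ : ℕ => E) 2 where
  toFun f := ⟨_root_.mapPairs U f,
    memℓp_two_iff.2 <| summable_norm_sq_mapPairs U.norm_map <| memℓp_two_iff.1 f.2⟩
  invFun f := ⟨_root_.mapPairs U.symm f,
    memℓp_two_iff.2 <| summable_norm_sq_mapPairs U.symm.norm_map <| memℓp_two_iff.1 f.2⟩
  map_add' f g := lp.ext <| funext_even_odd
    (fun m => by simp only [coeFn_add, Pi.add_apply, mapPairs_two_mul, ← Prod.mk_add_mk,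
      WithLp.toLp_add, map_add, WithLp.add_fst])
    (fun m => by simp only [coeFn_add, Pi.add_apply, mapPairs_two_mul_add_one, ← Prod.mk_add_mk,
      WithLp.toLp_add, map_add, WithLp.add_snd])
  map_smul' c f := lp.ext <| funext_even_odd
    (fun m => by simp only [coeFn_smul, Pi.smul_apply, mapPairs_two_mul, ← Prod.smul_mk,
      WithLp.toLp_smul, map_smul, WithLp.smul_fst, RingHom.id_apply])
    (fun m => by simp only [coeFn_smul, Pi.smul_apply, mapPairs_two_mul_add_one, ← Prod.smul_mk,
      WithLp.toLp_smul, map_smul, WithLp.smul_snd, RingHom.id_apply])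
  left_inv f := lp.ext <| mapPairs_mapPairs U f U.symm_apply_apply
  right_inv f := lp.ext <| mapPairs_mapPairs U.symm f U.apply_symm_apply
  norm_map' f := by
    rw [← sq_eq_sq₀ (norm_nonneg _) (norm_nonneg _), norm_sq_eq_tsum, norm_sq_eq_tsum]
    exact tsum_norm_sq_mapPairs U.norm_map (memℓp_two_iff.1 f.2)

theorem mapPairs_cons_cons (U : WithLp 2 (E × E) ≃ₗᵢ[𝕜] WithLp 2 (E × E)) (a b : E)
    (f : lp (fun _ : ℕ => E) 2) :
    mapPairs U (cons a (cons b f)) =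
      cons (U (WithLp.toLp 2 (a, b))).fst (cons (U (WithLp.toLp 2 (a, b))).snd (mapPairs U f)) := by
  refine lp.ext <| funext fun n => ?_
  rcases n with _ | _ | n
  · exact mapPairs_two_mul U _ 0
  · exact mapPairs_two_mul_add_one U _ 0
  · exact _root_.mapPairs_add_two U _ n

end lp

namespace LinearIsometryEquiv

variable (𝕜 α β γ δ : Type*) [NormedField 𝕜] [NormedAddCommGroup α] [NormedSpace 𝕜 α]
  [NormedAddCommGroup β] [NormedSpace 𝕜 β] [NormedAddCommGroup γ] [NormedSpace 𝕜 γ]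
  [NormedAddCommGroup δ] [NormedSpace 𝕜 δ]

noncomputable def withLpExchangeSnd :
    WithLp 2 (WithLp 2 (α × β) × WithLp 2 (γ × δ)) ≃ₗᵢ[𝕜]
      WithLp 2 (WithLp 2 (α × δ) × WithLp 2 (γ × β)) where
  toFun x := WithLp.toLp 2
    (WithLp.toLp 2 (x.fst.fst, x.snd.snd), WithLp.toLp 2 (x.snd.fst, x.fst.snd))
  invFun x := WithLp.toLp 2
    (WithLp.toLp 2 (x.fst.fst, x.snd.snd), WithLp.toLp 2 (x.snd.fst, x.fst.snd))
  map_add' _ _ := rfl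
  map_smul' _ _ := rfl
  left_inv _ := rfl
  right_inv _ := rfl
  norm_map' x := by
    change ‖WithLp.toLp 2 (WithLp.toLp 2 (x.fst.fst, x.snd.snd),
      WithLp.toLp 2 (x.snd.fst, x.fst.snd))‖ = ‖x‖
    rw [← sq_eq_sq₀ (norm_nonneg _) (norm_nonneg _)]
    simp only [WithLp.prod_norm_sq_eq_of_L2, WithLp.toLp_fst, WithLp.toLp_snd]
    ring

variable {𝕜 α β γ δ} in
@[simp] theorem withLpExchangeSnd_apply (a : α) (b : β) (c : γ) (d : δ) :
    withLpExchangeSnd 𝕜 α β γ δ (WithLp.toLp 2 (WithLp.toLp 2 (a, b), WithLp.toLp 2 (c, d))) =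
      WithLp.toLp 2 (WithLp.toLp 2 (a, d), WithLp.toLp 2 (c, b)) :=
  rfl

end LinearIsometryEquiv

theorem ContinuousLinearMap.sq_norm_apply_add_sq_sqrt {𝕜 X : Type*} [NontriviallyNormedField 𝕜]
    [NormedAddCommGroup X] [NormedSpace 𝕜 X] {T : X →L[𝕜] X} (hT : ‖T‖ ≤ 1) (x : X) :
    ‖T x‖ ^ 2 + √(‖x‖ ^ 2 - ‖T x‖ ^ 2) ^ 2 = ‖x‖ ^ 2 := by
  have hTx : ‖T x‖ ≤ ‖x‖ := by simpa using T.le_of_opNorm_le hT x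
  rw [Real.sq_sqrt (sub_nonneg.2 (pow_le_pow_left₀ (norm_nonneg _) hTx 2))]
  ring

section Dilation

variable {𝕜 X E : Type*} [NormedField 𝕜] [NormedAddCommGroup X] [NormedSpace 𝕜 X]
  [NormedAddCommGroup E] [NormedSpace 𝕜 E]

local notation "𝓦" => WithLp 2 (X × lp (fun _ : ℕ => E) 2)

noncomputable def schaefferDilation (T : X →L[𝕜] X) (D : X →ₗ[𝕜] E)
    (hTD : ∀ x, ‖T x‖ ^ 2 + ‖D x‖ ^ 2 = ‖x‖ ^ 2) : 𝓦 →ₗᵢ[𝕜] 𝓦 where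
  toFun w := WithLp.toLp 2 (T w.fst, lp.cons (D w.fst) w.snd)
  map_add' u v := by
    simp only [WithLp.add_fst, WithLp.add_snd, map_add, lp.cons_add]
    rfl
  map_smul' c u := by
    change WithLp.toLp 2 (T (c • u.fst), lp.cons (D (c • u.fst)) (c • u.snd)) = _
    rw [map_smul, map_smul, lp.cons_smul]
    rfl
  norm_map' w := by
    change ‖WithLp.toLp 2 (T w.fst, lp.cons (D w.fst) w.snd)‖ = ‖w‖
    rw [← sq_eq_sq₀ (norm_nonneg _) (norm_nonneg _), WithLp.prod_norm_sq_eq_of_L2,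
      WithLp.prod_norm_sq_eq_of_L2 w]
    simp only [WithLp.toLp_fst, WithLp.toLp_snd, lp.norm_cons_sq, ← hTD w.fst]
    ring

@[simp] theorem schaefferDilation_apply (T : X →L[𝕜] X) (D : X →ₗ[𝕜] E) (hTD) (w : 𝓦) :
    schaefferDilation T D hTD w = WithLp.toLp 2 (T w.fst, lp.cons (D w.fst) w.snd) :=
  rfl

theorem exists_commuting_isometric_dilation (T1 T2 : X →L[𝕜] X) (hcomm : T1 ∘L T2 = T2 ∘L T1)
    (D1 D2 : X →ₗ[𝕜] E) (hD1 : ∀ x, ‖T1 x‖ ^ 2 + ‖D1 x‖ ^ 2 = ‖x‖ ^ 2)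
    (hD2 : ∀ x, ‖T2 x‖ ^ 2 + ‖D2 x‖ ^ 2 = ‖x‖ ^ 2)
    (U : WithLp 2 (E × E) ≃ₗᵢ[𝕜] WithLp 2 (E × E))
    (hU : ∀ x, U (WithLp.toLp 2 (D1 (T2 x), D2 x)) = WithLp.toLp 2 (D2 (T1 x), D1 x)) :
    ∃ V1 V2 : 𝓦 →L[𝕜] 𝓦, (∀ w, ‖V1 w‖ = ‖w‖) ∧ (∀ w, ‖V2 w‖ = ‖w‖) ∧ V1 ∘L V2 = V2 ∘L V1 ∧
      ∀ (n1 n2 : ℕ) (x : X),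
        (WithLp.ofLp ((V1 ^ n1 * V2 ^ n2) (WithLp.toLp 2 (x, 0) : 𝓦))).1 =
          (T1 ^ n1 * T2 ^ n2) x := by
  set W1 := schaefferDilation T1 D1 hD1
  set W2 := schaefferDilation T2 D2 hD2
  set G := (LinearIsometryEquiv.refl 𝕜 X).withLpProdCongr 2 (lp.mapPairs U)
  have hG : ∀ w, G (W1 (W2 w)) = W2 (W1 (G w)) := fun w => by
    simp [W1, W2, G, lp.mapPairs_cons_cons, hU, ← ContinuousLinearMap.comp_apply, hcomm]
  refine ⟨(W1.comp G.toLinearIsometry).toContinuousLinearMap,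
    (G.symm.toLinearIsometry.comp W2).toContinuousLinearMap,
    fun w => LinearIsometry.norm_map _ w, fun w => LinearIsometry.norm_map _ w, ?_, ?_⟩
  · ext1 w
    simp [← hG]
  · intro n1 n2 x
    have h1 : Function.Semiconj WithLp.fst (W1.comp G.toLinearIsometry) T1 := fun w => rfl
    have h2 : Function.Semiconj WithLp.fst (G.symm.toLinearIsometry.comp W2) T2 := fun w => rfl
    simp only [mul_apply_eq_comp, FunLike.coe_pow_eq_iterate]
    exact (h1.iterate_right n1 _).trans (congrArg _ (h2.iterate_right n2 _))

end Dilation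

theorem normed_space_ando_isometric_dilation_general
    (X : Type*) [NormedAddCommGroup X] [NormedSpace ℂ X]
    (T1 T2 : X →L[ℂ] X) (hcomm : T1 ∘L T2 = T2 ∘L T1)
    (hT1 : ‖T1‖ ≤ 1) (hT2 : ‖T2‖ ≤ 1)
    (X1 X2 : Type*) [NormedAddCommGroup X1] [NormedSpace ℂ X1]
    [NormedAddCommGroup X2] [NormedSpace ℂ X2]
    (j1 : X ≃ₗ[ℂ] X1) (j2 : X ≃ₗ[ℂ] X2)
    (hj1 : ∀ x : X, ‖j1 x‖ = Real.sqrt (‖x‖ ^ 2 - ‖T1 x‖ ^ 2))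
    (hj2 : ∀ x : X, ‖j2 x‖ = Real.sqrt (‖x‖ ^ 2 - ‖T2 x‖ ^ 2))
    (S : WithLp 2 (X1 × X2) ≃ₗᵢ[ℂ] WithLp 2 (X1 × X2))
    (hS : ∀ x : X,
      S (WithLp.toLp 2 (j1 (T2 x), j2 x) : WithLp 2 (X1 × X2))
        = (WithLp.toLp 2 (j1 x, j2 (T1 x)) : WithLp 2 (X1 × X2))) :
    ∃ V1 V2 : WithLp 2 (X × lp (fun _ : ℕ => WithLp 2 (X1 × X2)) 2) →L[ℂ]
        WithLp 2 (X × lp (fun _ : ℕ => WithLp 2 (X1 × X2)) 2),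
      (∀ w, ‖V1 w‖ = ‖w‖) ∧ (∀ w, ‖V2 w‖ = ‖w‖) ∧
      V1 ∘L V2 = V2 ∘L V1 ∧
      (∀ (n1 n2 : ℕ) (x : X),
        (WithLp.ofLp (((V1 ^ n1) * (V2 ^ n2))
            (WithLp.toLp 2 (x, 0) : WithLp 2 (X × lp (fun _ : ℕ => WithLp 2 (X1 × X2)) 2)))).1
          = ((T1 ^ n1) * (T2 ^ n2)) x) := by
  let toL2 := (WithLp.linearEquiv 2 ℂ (X1 × X2)).symm.toLinearMap
  let D1 := toL2 ∘ₗ LinearMap.inl ℂ X1 X2 ∘ₗ j1.toLinearMap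
  let D2 := toL2 ∘ₗ LinearMap.inr ℂ X1 X2 ∘ₗ j2.toLinearMap
  have hD1 : ∀ x, ‖T1 x‖ ^ 2 + ‖D1 x‖ ^ 2 = ‖x‖ ^ 2 := fun x => by
    simpa [D1, toL2, hj1] using T1.sq_norm_apply_add_sq_sqrt hT1 x
  have hD2 : ∀ x, ‖T2 x‖ ^ 2 + ‖D2 x‖ ^ 2 = ‖x‖ ^ 2 := fun x => by
    simpa [D2, toL2, hj2] using T2.sq_norm_apply_add_sq_sqrt hT2 x
  -- `U ((a₁, a₂), (b₁, b₂)) = ((b₁, s₂), (s₁, a₂))` with `s = S (a₁, b₂)`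
  let σ := LinearIsometryEquiv.withLpExchangeSnd ℂ X1 X2 X1 X2
  let U := σ.trans (((S.withLpProdCongr 2 (.refl ℂ _)).trans
    (LinearIsometryEquiv.withLpProdComm 2 ℂ _ _)).trans σ)
  exact exists_commuting_isometric_dilation T1 T2 hcomm D1 D2 hD1 hD2 U fun x => by
    simp [U, σ, D1, D2, toL2, hS]

/-- (Part of Theorem 3.1). Let `(T1, T2)` be a commuting pair of contractions on a
complex normed space `X` (not assumed complete, norms allowed to equal 1) such that
`A_{Ti}(x) = (‖x‖² - ‖Ti x‖²)^{1/2}` defines a norm on `X` for `i = 1, 2`, realized by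
normed spaces `Xi` via linear bijections `ji`. If there is a surjective linear isometry
`S` on `X1 ⊕₂ X2` with `S (j1 (T2 x), j2 x) = (j1 x, j2 (T1 x))` for all `x`, then
`(T1, T2)` dilates to a commuting pair of isometries on `X ⊕₂ ℓ²(ℕ, X1 ⊕₂ X2)`. -/
theorem normed_space_ando_isometric_dilation
    (X : Type*) [NormedAddCommGroup X] [NormedSpace ℂ X]
    (T1 T2 : X →L[ℂ] X) (hcomm : T1 ∘L T2 = T2 ∘L T1)
    (hT1 : ‖T1‖ ≤ 1) (hT2 : ‖T2‖ ≤ 1)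
    (hdef1 : ∀ x : X, Real.sqrt (‖x‖ ^ 2 - ‖T1 x‖ ^ 2) = 0 → x = 0)
    (hdef2 : ∀ x : X, Real.sqrt (‖x‖ ^ 2 - ‖T2 x‖ ^ 2) = 0 → x = 0)
    (htri1 : ∀ x y : X,
      Real.sqrt (‖x + y‖ ^ 2 - ‖T1 (x + y)‖ ^ 2)
        ≤ Real.sqrt (‖x‖ ^ 2 - ‖T1 x‖ ^ 2) + Real.sqrt (‖y‖ ^ 2 - ‖T1 y‖ ^ 2))
    (htri2 : ∀ x y : X,
      Real.sqrt (‖x + y‖ ^ 2 - ‖T2 (x + y)‖ ^ 2)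
        ≤ Real.sqrt (‖x‖ ^ 2 - ‖T2 x‖ ^ 2) + Real.sqrt (‖y‖ ^ 2 - ‖T2 y‖ ^ 2))
    (X1 X2 : Type*) [NormedAddCommGroup X1] [NormedSpace ℂ X1]
    [NormedAddCommGroup X2] [NormedSpace ℂ X2]
    (j1 : X ≃ₗ[ℂ] X1) (j2 : X ≃ₗ[ℂ] X2)
    (hj1 : ∀ x : X, ‖j1 x‖ = Real.sqrt (‖x‖ ^ 2 - ‖T1 x‖ ^ 2))
    (hj2 : ∀ x : X, ‖j2 x‖ = Real.sqrt (‖x‖ ^ 2 - ‖T2 x‖ ^ 2))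
    (S : WithLp 2 (X1 × X2) ≃ₗᵢ[ℂ] WithLp 2 (X1 × X2))
    (hS : ∀ x : X,
      S (WithLp.toLp 2 (j1 (T2 x), j2 x) : WithLp 2 (X1 × X2))
        = (WithLp.toLp 2 (j1 x, j2 (T1 x)) : WithLp 2 (X1 × X2))) :
    ∃ V1 V2 : WithLp 2 (X × lp (fun _ : ℕ => WithLp 2 (X1 × X2)) 2) →L[ℂ]
        WithLp 2 (X × lp (fun _ : ℕ => WithLp 2 (X1 × X2)) 2),
      (∀ w, ‖V1 w‖ = ‖w‖) ∧ (∀ w, ‖V2 w‖ = ‖w‖) ∧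
      V1 ∘L V2 = V2 ∘L V1 ∧
      (∀ (n1 n2 : ℕ) (x : X),
        (WithLp.ofLp (((V1 ^ n1) * (V2 ^ n2))
            (WithLp.toLp 2 (x, 0) : WithLp 2 (X × lp (fun _ : ℕ => WithLp 2 (X1 × X2)) 2)))).1
          = ((T1 ^ n1) * (T2 ^ n2)) x) :=
  normed_space_ando_isometric_dilation_general X T1 T2 hcomm hT1 hT2 X1 X2 j1 j2 hj1 hj2 S hS
end
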